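/- arXiv:1609.08808 — 2 statements merged into one kernel-verified Lean document; each statement's English description precedes it below -/
import Mathlib

section
/- Let X be the blowup of P^3 × P^3 along the diagonal-Segre embedded P^1 × P^1 × P^1, where H^4(X) has basis {y_1^2, y_1y_2, y_2^2, z_1e, z_2e, z_3e, e^2} with y_1 e = (z_1+z_2)e and y_2 e = (z_2+z_3)e. Then the six elements y_1^2, y_1y_2, y_2^2, y_1e, y_2e, e^2 are linearly independent; i.e., dim L^2(X) = 6 < 7 = dim H^4(X,Q). -/
/-- In degree 4 of the cohomology of the blowup `X` of `ℙ³ × ℙ³`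
along `ℙ¹ × ℙ¹ × ℙ¹`, with basis `{y₁², y₁y₂, y₂², z₁e, z₂e, z₃e, e²}` and
`y₁e = (z₁+z₂)e`, `y₂e = (z₂+z₃)e`, the six elements
`y₁², y₁y₂, y₂², y₁e, y₂e, e²` are linearly independent; hence
`dim L²(X) = 6 < 7 = dim H⁴(X, ℚ)`. -/
theorem stmt7 (H : Type*) [CommRing H] [Algebra ℚ H]
    (y1 y2 z1 z2 z3 e : H)
    (hy1e : y1 * e = (z1 + z2) * e)
    (hy2e : y2 * e = (z2 + z3) * e)
    (hbasis : LinearIndependent ℚ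
      ![y1 ^ 2, y1 * y2, y2 ^ 2, z1 * e, z2 * e, z3 * e, e ^ 2]) :
    LinearIndependent ℚ
      ![y1 ^ 2, y1 * y2, y2 ^ 2, y1 * e, y2 * e, e ^ 2] ∧
    Module.finrank ℚ (Submodule.span ℚ
      {y1 ^ 2, y1 * y2, y2 ^ 2, y1 * e, y2 * e, e ^ 2}) = 6 ∧
    Module.finrank ℚ (Submodule.span ℚ
      {y1 ^ 2, y1 * y2, y2 ^ 2, z1 * e, z2 * e, z3 * e, e ^ 2}) = 7 := by
  have hli : LinearIndependent ℚ
      ![y1 ^ 2, y1 * y2, y2 ^ 2, y1 * e, y2 * e, e ^ 2] := by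
    rw [Fintype.linearIndependent_iff] at hbasis ⊢
    intro g hg
    have hsum : ∑ i, (![g 0, g 1, g 2, g 3, g 3 + g 4, g 4, g 5] : Fin 7 → ℚ) i •
        ![y1 ^ 2, y1 * y2, y2 ^ 2, z1 * e, z2 * e, z3 * e, e ^ 2] i = 0 := by
      have h := hg
      simp [Fin.sum_univ_seven, Fin.sum_univ_six, Matrix.cons_val_zero,
        Matrix.cons_val_one, Matrix.head_cons, Matrix.cons_val_two,
        Matrix.tail_cons, Matrix.cons_val_three, Matrix.cons_val_four,
        Matrix.cons_val_one] at h ⊢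
      rw [hy1e, hy2e] at h
      have r1 : (![y1 ^ 2, y1 * y2, y2 ^ 2, (z1 + z2) * e, (z2 + z3) * e, e ^ 2] :
          Fin 6 → H) 5 = e ^ 2 := rfl
      have r2 : (![y1 ^ 2, y1 * y2, y2 ^ 2, z1 * e, z2 * e, z3 * e, e ^ 2] :
          Fin 7 → H) 5 = z3 * e := rfl
      have r3 : (![y1 ^ 2, y1 * y2, y2 ^ 2, z1 * e, z2 * e, z3 * e, e ^ 2] :
          Fin 7 → H) 6 = e ^ 2 := rfl
      have r4 : (![g 0, g 1, g 2, g 3, g 3 + g 4, g 4, g 5] : Fin 7 → ℚ) 5 = g 4 := rfl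
      have r5 : (![g 0, g 1, g 2, g 3, g 3 + g 4, g 4, g 5] : Fin 7 → ℚ) 6 = g 5 := rfl
      simp only [Algebra.smul_def, map_add] at h ⊢
      linear_combination h
    have key := hbasis _ hsum
    intro i
    fin_cases i
    · exact key 0
    · exact key 1
    · exact key 2
    · exact key 3
    · have := key 5; simpa using this
    · have := key 6; simpa using this
  refine ⟨hli, ?_, ?_⟩
  · have hset : ({y1 ^ 2, y1 * y2, y2 ^ 2, y1 * e, y2 * e, e ^ 2} : Set H)
        = Set.range ![y1 ^ 2, y1 * y2, y2 ^ 2, y1 * e, y2 * e, e ^ 2] := by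
      ext x
      simp [Matrix.range_cons, Matrix.range_empty]
      tauto
    rw [hset, finrank_span_eq_card hli]
    simp
  · have hset : ({y1 ^ 2, y1 * y2, y2 ^ 2, z1 * e, z2 * e, z3 * e, e ^ 2} : Set H)
        = Set.range ![y1 ^ 2, y1 * y2, y2 ^ 2, z1 * e, z2 * e, z3 * e, e ^ 2] := by
      ext x
      simp [Matrix.range_cons, Matrix.range_empty]
      tauto
    rw [hset, finrank_span_eq_card hbasis]
    simp
end

section
/- In H^*(Fl(2,3;5)) as above, σ_1^2 ζ^4 = σ_{3,3} + 2 σ_{3,2} ζ + (σ_{2,2} + σ_{3,1}) ζ^2, and this element does not lie in the Q-span of σ_1^6 = σ_{3,3}, σ_1^5 ζ (a nonzero multiple of σ_{3,2} ζ), and σ_1^4 ζ^2 = (2σ_{2,2} + 3σ_{3,1}) ζ^2, inside H^{12}(X,Q) = Q σ_{3,3} ⊕ Q σ_{3,2} ζ ⊕ Q σ_{3,1} ζ^2 ⊕ Q σ_{2,2} ζ^2. Consequently σ_1^6, σ_1^5 ζ, σ_1^4 ζ^2, σ_1^2 ζ^4 form a basis of H^{12}(X,Q). -/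
/-!
Reducing with the cubic relation of `ζ` gives `ζ⁴ = σ₁₁ζ² + σ₂₁ζ + σ₃₁`, and Pieri's rule then
writes `σ₁⁶, σ₁⁵ζ, σ₁⁴ζ², σ₁²ζ⁴` in the Schubert basis of `H¹²` with the transition matrix
`!![5, 0, 0, 0; 0, 5, 0, 0; 0, 0, 3, 2; 1, 2, 1, 1]`. Its determinant is `25 ≠ 0`, so the four
monomials are again a basis of the same space; in particular none of them lies in the span of
the other three.
-/

open Submodule

section RowCombinations

variable {K M ι : Type*} [Field K] [AddCommGroup M] [Module K M] [Fintype ι] [DecidableEq ι]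
  {b : ι → M} {A : Matrix ι ι K}

theorem LinearIndependent.linearCombination_rows (hb : LinearIndependent K b) (hA : A.det ≠ 0) :
    LinearIndependent K fun i ↦ Fintype.linearCombination K b (A i) :=
  (Matrix.linearIndependent_rows_of_det_ne_zero hA).map' _ <| LinearMap.ker_eq_bot.mpr <|
    linearIndependent_iff_injective_fintypeLinearCombination.mp hb

theorem span_range_linearCombination_rows (hA : A.det ≠ 0) :
    span K (Set.range fun i ↦ Fintype.linearCombination K b (A i)) = span K (Set.range b) := by
  have hrows : span K (Set.range A) = ⊤ :=
    (Matrix.linearIndependent_rows_of_det_ne_zero hA).span_eq_top_of_card_eq_finrank'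
      (Module.finrank_fintype_fun_eq_card K).symm
  rw [← Fintype.range_linearCombination (R := K) (v := b), LinearMap.range_eq_map, ← hrows,
    Submodule.map_span]
  exact congrArg _ (Set.range_comp _ _)

end RowCombinations

section Pieri

variable {H : Type*} [CommRing H] {σ1 σ2 σ3 σ11 σ21 σ31 σ22 σ32 σ33 ζ : H}

theorem sigma_one_pow_four (p1 : σ1 * σ1 = σ2 + σ11) (p2 : σ1 * σ2 = σ3 + σ21)
    (p3 : σ1 * σ11 = σ21) (p4 : σ1 * σ3 = σ31) (p5 : σ1 * σ21 = σ31 + σ22) :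
    σ1 ^ 4 = 2 * σ22 + 3 * σ31 := by
  linear_combination σ1 ^ 2 * p1 + σ1 * (p2 + p3) + p4 + 2 * p5

theorem sigma_one_pow_five (h4 : σ1 ^ 4 = 2 * σ22 + 3 * σ31) (p6 : σ1 * σ31 = σ32)
    (p7 : σ1 * σ22 = σ32) : σ1 ^ 5 = 5 * σ32 := by
  linear_combination σ1 * h4 + 3 * p6 + 2 * p7

theorem zeta_pow_four (hζ : ζ ^ 3 + σ1 * ζ ^ 2 + σ2 * ζ + σ3 = 0) (p1 : σ1 * σ1 = σ2 + σ11)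
    (p2 : σ1 * σ2 = σ3 + σ21) (p4 : σ1 * σ3 = σ31) :
    ζ ^ 4 = σ11 * ζ ^ 2 + σ21 * ζ + σ31 := by
  linear_combination (ζ - σ1) * hζ + ζ ^ 2 * p1 + ζ * p2 + p4

theorem sigma_one_sq_mul_zeta_pow_four (hζ4 : ζ ^ 4 = σ11 * ζ ^ 2 + σ21 * ζ + σ31)
    (p3 : σ1 * σ11 = σ21) (p5 : σ1 * σ21 = σ31 + σ22) (p6 : σ1 * σ31 = σ32)
    (p7 : σ1 * σ22 = σ32) (p8 : σ1 * σ32 = σ33) :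
    σ1 ^ 2 * ζ ^ 4 = σ33 + 2 * (σ32 * ζ) + (σ22 + σ31) * ζ ^ 2 := by
  have h5 : σ1 * ζ ^ 4 = σ21 * ζ ^ 2 + (σ31 + σ22) * ζ + σ32 := by
    linear_combination σ1 * hζ4 + ζ ^ 2 * p3 + ζ * p5 + p6
  linear_combination σ1 * h5 + ζ ^ 2 * p5 + ζ * (p6 + p7) + p8

end Pieri

def schubertTransition : Matrix (Fin 4) (Fin 4) ℚ :=
  !![5, 0, 0, 0; 0, 5, 0, 0; 0, 0, 3, 2; 1, 2, 1, 1]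

theorem det_schubertTransition : schubertTransition.det = 25 := by
  simp [schubertTransition, Matrix.det_succ_row_zero, Fin.sum_univ_succ]
  norm_num

/-- In `H^*(Fl(2,3;5))`,
`σ₁²ζ⁴ = σ₃₃ + 2σ₃₂ζ + (σ₂₂ + σ₃₁)ζ²`, and this element does not lie in the
span of `σ₁⁶`, `σ₁⁵ζ`, `σ₁⁴ζ²` inside
`H¹²(X,ℚ) = ℚσ₃₃ ⊕ ℚσ₃₂ζ ⊕ ℚσ₃₁ζ² ⊕ ℚσ₂₂ζ²`. Consequently
`σ₁⁶, σ₁⁵ζ, σ₁⁴ζ², σ₁²ζ⁴` form a basis of `H¹²(X,ℚ)`. -/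
theorem stmt11 (H : Type*) [CommRing H] [Algebra ℚ H]
    (σ1 σ2 σ3 σ11 σ21 σ31 σ22 σ32 σ33 ζ : H)
    (hζ : ζ ^ 3 + σ1 * ζ ^ 2 + σ2 * ζ + σ3 = 0)
    (p1 : σ1 * σ1 = σ2 + σ11)
    (p2 : σ1 * σ2 = σ3 + σ21)
    (p3 : σ1 * σ11 = σ21)
    (p4 : σ1 * σ3 = σ31)
    (p5 : σ1 * σ21 = σ31 + σ22)
    (p6 : σ1 * σ31 = σ32)
    (p7 : σ1 * σ22 = σ32)
    (p8 : σ1 * σ32 = σ33)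
    (hbasis : LinearIndependent ℚ ![σ33, σ32 * ζ, σ31 * ζ ^ 2, σ22 * ζ ^ 2]) :
    σ1 ^ 2 * ζ ^ 4 = σ33 + 2 * (σ32 * ζ) + (σ22 + σ31) * ζ ^ 2 ∧
    σ1 ^ 2 * ζ ^ 4 ∉
      Submodule.span ℚ ({σ1 ^ 6, σ1 ^ 5 * ζ, σ1 ^ 4 * ζ ^ 2} : Set H) ∧
    LinearIndependent ℚ ![σ1 ^ 6, σ1 ^ 5 * ζ, σ1 ^ 4 * ζ ^ 2, σ1 ^ 2 * ζ ^ 4] ∧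
    Submodule.span ℚ
      ({σ1 ^ 6, σ1 ^ 5 * ζ, σ1 ^ 4 * ζ ^ 2, σ1 ^ 2 * ζ ^ 4} : Set H) =
    Submodule.span ℚ ({σ33, σ32 * ζ, σ31 * ζ ^ 2, σ22 * ζ ^ 2} : Set H) := by
  have h4 := sigma_one_pow_four p1 p2 p3 p4 p5
  have h5 := sigma_one_pow_five h4 p6 p7
  have h24 := sigma_one_sq_mul_zeta_pow_four (zeta_pow_four hζ p1 p2 p4) p3 p5 p6 p7 p8
  have hrows : ![σ1 ^ 6, σ1 ^ 5 * ζ, σ1 ^ 4 * ζ ^ 2, σ1 ^ 2 * ζ ^ 4] = fun i ↦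
      Fintype.linearCombination ℚ ![σ33, σ32 * ζ, σ31 * ζ ^ 2, σ22 * ζ ^ 2]
        (schubertTransition i) := by
    funext i
    fin_cases i <;>
      simp [schubertTransition, Fintype.linearCombination_apply, Fin.sum_univ_four,
        Algebra.smul_def, map_ofNat]
    · linear_combination σ1 * h5 + 5 * p8
    · linear_combination ζ * h5
    · linear_combination ζ ^ 2 * h4
    · linear_combination h24
  have hdet : schubertTransition.det ≠ 0 := by norm_num [det_schubertTransition]
  have hli := hrows ▸ hbasis.linearCombination_rows hdet
  refine ⟨h24, ?_, hli, ?_⟩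
  · simpa [Set.image_insert_eq] using hli.notMem_span_image (s := {0, 1, 2}) (x := 3) (by decide)
  · have hspan := span_range_linearCombination_rows
      (b := ![σ33, σ32 * ζ, σ31 * ζ ^ 2, σ22 * ζ ^ 2]) hdet
    rw [← hrows] at hspan
    simpa only [Matrix.range_cons, Matrix.range_empty, Set.union_empty, Set.singleton_union]
      using hspan
end
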